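/- arXiv:1906.11326 — 3 statements merged into one kernel-verified Lean document; each statement's English description precedes it below -/
import Mathlib

section
/- Let p ≥ 2 be an integer. There exists a constant α* ∈ (0,1), depending only on p, such that (1 − H(α))/(1 + H(α)) ≤ (p/2)·((1 − α)/(1 + α))^2 for every α ∈ [α*, 1). -/
open Finset


/-- `mu p t = ((t - t^p)/((p-1)(1-t)))^(1/p)`, the real positive `p`th root. -/
noncomputable def mu (p : ℕ) (t : ℝ) : ℝ :=
  ((t - t ^ p) / (((p : ℝ) - 1) * (1 - t))) ^ ((1 : ℝ) / p)

/-- `H(α) = p α / ((p-1) μ(α) + μ(α)^(1-p) α^p)`. -/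
noncomputable def Hfun (p : ℕ) (α : ℝ) : ℝ :=
  (p : ℝ) * α / (((p : ℝ) - 1) * mu p α + α ^ p / mu p α ^ (p - 1))

private lemma gauss_sum' (m : ℕ) : ∑ k ∈ range m, ((k:ℝ)+1) = m*(m+1)/2 := by
  induction m with
  | zero => simp
  | succ m ih => rw [sum_range_succ, ih]; push_cast; ring

private lemma poly_id' (m : ℕ) (x : ℝ) :
    (m:ℝ) * x^(m+1) - ((m:ℝ)+1) * x^m + 1
      = (x-1)^2 * ∑ k ∈ range m, ((k:ℝ)+1) * x^k := by
  induction m with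
  | zero => simp
  | succ m ih =>
    rw [sum_range_succ, mul_add, ← ih]
    push_cast; ring

private lemma bern (a : ℝ) (h : -1 ≤ a) (m : ℕ) : 1 + (m:ℝ)*a ≤ (1+a)^m :=
  one_add_mul_le_pow (by linarith) m

set_option maxHeartbeats 2000000

/-- **Lemma 5.** There exists `α* ∈ (0,1)` (depending only on `p`) such that
`(1 - H(α))/(1 + H(α)) ≤ (p/2)((1-α)/(1+α))^2` for every `α ∈ [α*, 1)`. -/
theorem exists_alpha_star (p : ℕ) (hp : 2 ≤ p) :
    ∃ αstar ∈ Set.Ioo (0 : ℝ) 1,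
      ∀ α ∈ Set.Ico αstar (1 : ℝ),
        (1 - Hfun p α) / (1 + Hfun p α) ≤ ((p : ℝ) / 2) * ((1 - α) / (1 + α)) ^ 2 := by
  obtain ⟨n, rfl⟩ : ∃ n, p = n + 2 := ⟨p - 2, by omega⟩
  have hc : (0:ℝ) < (n:ℝ) + 2 := by positivity
  have hc4 : (0:ℝ) < 4*((n:ℝ)+2) := by positivity
  have hfrac8 : 1/(4*((n:ℝ)+2)) ≤ 1/8 := by
    rw [div_le_div_iff₀ hc4 (by norm_num)]
    have : (0:ℝ) ≤ (n:ℝ) := Nat.cast_nonneg n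
    linarith
  have hfrac0 : 0 < 1/(4*((n:ℝ)+2)) := by positivity
  refine ⟨1 - 1/(4*((n:ℝ)+2)), ⟨by linarith, by linarith⟩, ?_⟩
  rintro α ⟨hαl, hα1⟩
  have hα0 : (7:ℝ)/8 ≤ α := by linarith
  have hα0' : (0:ℝ) < α := by linarith
  have hα1' : α ≤ 1 := hα1.le
  -- the geometric sum
  set S : ℝ := ∑ k ∈ range (n+1), α^k with hSdef
  have hS_pos : 0 < S :=
    sum_pos (fun k _ => pow_pos hα0' k) ⟨0, mem_range.mpr (Nat.succ_pos n)⟩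
  have hgeom : (1-α)*S = 1 - α^(n+1) := by
    have h := geom_sum_mul α (n+1)
    linear_combination (-1 : ℝ) * h
  -- B and mu
  set B : ℝ := (α - α^(n+2)) / (((n:ℝ)+1) * (1-α)) with hBdef
  have hB : B = α * S / ((n:ℝ)+1) := by
    rw [hBdef]
    have h1 : (1:ℝ) - α ≠ 0 := by linarith
    have h2 : ((n:ℝ)+1) ≠ 0 := by positivity
    field_simp
    linear_combination (-α) * hgeom
  have hB_pos : 0 < B := by
    rw [hB]; positivity
  set μ : ℝ := mu (n+2) α with hμdef
  have hcast : ((n+2:ℕ):ℝ) = (n:ℝ)+2 := by push_cast; ring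
  have hμ_eq : μ = B ^ ((1:ℝ)/((n:ℝ)+2)) := by
    rw [hμdef, mu, hBdef, hcast]
    congr 2
    ring
  have hμ_pos : 0 < μ := by
    rw [hμ_eq]; exact Real.rpow_pos_of_pos hB_pos _
  have hμ_pow : μ ^ (n+2) = B := by
    rw [hμ_eq, ← Real.rpow_natCast (B ^ ((1:ℝ)/((n:ℝ)+2))) (n+2),
      ← Real.rpow_mul hB_pos.le]
    rw [show (1:ℝ)/((n:ℝ)+2) * ((n+2:ℕ):ℝ) = 1 by push_cast; field_simp]
    exact Real.rpow_one B
  -- α ≤ μ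
  have hS_ge : ((n:ℝ)+1) * α^(n+1) ≤ S := by
    calc ((n:ℝ)+1)*α^(n+1) = ∑ _k ∈ range (n+1), α^(n+1) := by
          rw [sum_const, card_range, nsmul_eq_mul]; push_cast; ring
      _ ≤ S := sum_le_sum fun k hk =>
          pow_le_pow_of_le_one hα0'.le hα1' (by have := mem_range.mp hk; omega)
  have hαp_le_B : α^(n+2) ≤ B := by
    rw [hB, le_div_iff₀ (by positivity : (0:ℝ) < (n:ℝ)+1)]
    have h := mul_le_mul_of_nonneg_left hS_ge hα0'.le
    calc α^(n+2) * ((n:ℝ)+1) = α * (((n:ℝ)+1)*α^(n+1)) := by ring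
      _ ≤ α * S := h
  have hαμ : α ≤ μ :=
    le_of_pow_le_pow_left₀ (Nat.succ_ne_zero _) hμ_pos.le (by rw [hμ_pow]; exact hαp_le_B)
  -- bound on μ^p - α^p
  have key : ∀ m : ℕ, 1 - α^m ≤ (m:ℝ)*(1-α) := by
    intro m
    have := bern (α - 1) (by linarith) m
    have h2 : (1 + (α-1)) = α := by ring
    rw [h2] at this
    linarith
  have hterm : ∀ k ∈ range (n+1), α^k - α^(n+1) ≤ ((n+1-k:ℕ):ℝ)*(1-α) := by
    intro k hk
    have hk' : k < n+1 := mem_range.mp hk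
    have h1 : α^(n+1) = α^k * α^(n+1-k) := by rw [← pow_add]; congr 1; omega
    have h2 : α^k ≤ 1 := pow_le_one₀ hα0'.le hα1'
    have h3 : α^(n+1-k) ≤ 1 := pow_le_one₀ hα0'.le hα1'
    have h4 := key (n+1-k)
    have h7 : (0:ℝ) ≤ 1 - α^(n+1-k) := by linarith
    calc α^k - α^(n+1) = α^k * (1 - α^(n+1-k)) := by rw [h1]; ring
      _ ≤ 1 * (1 - α^(n+1-k)) := mul_le_mul_of_nonneg_right h2 h7
      _ = 1 - α^(n+1-k) := one_mul _
      _ ≤ ((n+1-k:ℕ):ℝ)*(1-α) := h4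
  have hsum_desc : ∑ k ∈ range (n+1), ((n+1-k : ℕ):ℝ) = ((n:ℝ)+1)*((n:ℝ)+2)/2 := by
    rw [← Finset.sum_range_reflect (fun k => ((n+1-k : ℕ):ℝ)) (n+1)]
    have h : ∀ j ∈ range (n+1), ((n+1-(n+1-1-j) : ℕ):ℝ) = (j:ℝ)+1 := by
      intro j hj
      have := mem_range.mp hj
      rw [show n+1-(n+1-1-j) = j+1 by omega]
      push_cast; ring
    rw [Finset.sum_congr rfl h, gauss_sum']
    push_cast; ring
  have hS_sub : S - ((n:ℝ)+1)*α^(n+1) ≤ (1-α)*(((n:ℝ)+1)*((n:ℝ)+2)/2) := by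
    have h1 : S - ((n:ℝ)+1)*α^(n+1) = ∑ k ∈ range (n+1), (α^k - α^(n+1)) := by
      rw [Finset.sum_sub_distrib, sum_const, card_range, nsmul_eq_mul, hSdef]
      push_cast; ring
    rw [h1]
    calc ∑ k ∈ range (n+1), (α^k - α^(n+1))
        ≤ ∑ k ∈ range (n+1), ((n+1-k:ℕ):ℝ)*(1-α) := sum_le_sum hterm
      _ = (∑ k ∈ range (n+1), ((n+1-k:ℕ):ℝ)) * (1-α) := by rw [sum_mul]
      _ = (1-α)*(((n:ℝ)+1)*((n:ℝ)+2)/2) := by rw [hsum_desc]; ring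
  have hn1 : (0:ℝ) < (n:ℝ)+1 := by positivity
  have key2 : μ^(n+2) - α^(n+2) ≤ ((n:ℝ)+2)*α*(1-α)/2 := by
    have h := mul_le_mul_of_nonneg_left hS_sub hα0'.le
    have hq : μ^(n+2) = α*S/((n:ℝ)+1) := by rw [hμ_pow, hB]
    have heq : μ^(n+2) - α^(n+2) = (α*(S - ((n:ℝ)+1)*α^(n+1)))/((n:ℝ)+1) := by
      rw [hq]; field_simp; ring
    rw [heq, div_le_iff₀ hn1]
    calc α*(S - ((n:ℝ)+1)*α^(n+1)) ≤ α*((1-α)*(((n:ℝ)+1)*((n:ℝ)+2)/2)) := by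
          rw [mul_sub] at h ⊢; exact h
      _ = ((n:ℝ)+2)*α*(1-α)/2*((n:ℝ)+1) := by ring
  -- Bernoulli lower bound:  α^(n+2) + (n+2) α^(n+1) (μ-α) ≤ μ^(n+2)
  have hber : α^(n+2) + ((n:ℝ)+2)*α^(n+1)*(μ - α) ≤ μ^(n+2) := by
    have hdiv : 0 < μ/α := by positivity
    have h := bern (μ/α - 1) (by linarith) (n+2)
    rw [show (1 + (μ/α - 1)) = μ/α by ring, div_pow] at h
    have h2 := mul_le_mul_of_nonneg_left h (le_of_lt (pow_pos hα0' (n+2)))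
    have h3 : α^(n+2)*(μ^(n+2)/α^(n+2)) = μ^(n+2) := by field_simp
    have h4 : α^(n+2)*(1+((n+2:ℕ):ℝ)*(μ/α-1)) = α^(n+2) + ((n:ℝ)+2)*α^(n+1)*(μ-α) := by
      push_cast
      field_simp
      ring
    rw [h3, h4] at h2
    exact h2
  have h6 : μ - α ≤ (1-α)/(2*α^n) := by
    have h5 : α^(n+1)*(μ-α) ≤ α*(1-α)/2 := by
      have hcombo : ((n:ℝ)+2)*(α^(n+1)*(μ-α)) ≤ ((n:ℝ)+2)*(α*(1-α)/2) := by
        linarith [hber, key2]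
      exact le_of_mul_le_mul_left hcombo hc
    rw [le_div_iff₀ (by positivity : (0:ℝ) < 2*α^n)]
    have h5' : α*(α^n*(μ-α)) ≤ α*((1-α)/2) := by
      rw [show α*(α^n*(μ-α)) = α^(n+1)*(μ-α) from by ring,
        show α*((1-α)/2) = α*(1-α)/2 from by ring]
      exact h5
    have := le_of_mul_le_mul_left h5' hα0'
    linarith
  -- the denominator D
  set D : ℝ := ((n:ℝ)+1)*μ + α^(n+2)/μ^(n+1) with hDdef
  have hHval : Hfun (n+2) α = ((n:ℝ)+2)*α/D := by
    rw [Hfun, hDdef, ← hμdef]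
    push_cast
    ring
  set x : ℝ := μ/α with hxdef
  have hx1 : 1 ≤ x := (one_le_div hα0').mpr hαμ
  have hμx : μ = α * x := by rw [hxdef, mul_div_cancel₀]; exact hα0'.ne'
  set q : ℝ := ∑ k ∈ range (n+1), ((k:ℝ)+1) * x^k with hqdef
  have hq0 : 0 ≤ q :=
    sum_nonneg fun k _ => mul_nonneg (by positivity) (pow_nonneg (by linarith) k)
  have hq_ub : q ≤ ((n:ℝ)+1)*((n:ℝ)+2)/2 * x^(n+1) := by
    calc q ≤ ∑ k ∈ range (n+1), ((k:ℝ)+1) * x^(n+1) := by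
          apply sum_le_sum
          intro k hk
          have hxk : x^k ≤ x^(n+1) :=
            pow_le_pow_right₀ hx1 (by have := mem_range.mp hk; omega)
          exact mul_le_mul_of_nonneg_left hxk (by positivity)
      _ = (∑ k ∈ range (n+1), ((k:ℝ)+1)) * x^(n+1) := by rw [sum_mul]
      _ = ((n:ℝ)+1)*((n:ℝ)+2)/2 * x^(n+1) := by rw [gauss_sum']; push_cast; ring
  have hDmul : D*μ^(n+1) = ((n:ℝ)+1)*μ^(n+2) + α^(n+2) := by
    rw [hDdef]
    field_simp
    ring
  have hfact : ((n:ℝ)+1)*μ^(n+2) + α^(n+2) - ((n:ℝ)+2)*α*μ^(n+1) = α^(n+2)*((x-1)^2*q) := by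
    rw [hμx]
    have hid := poly_id' (n+1) x
    push_cast at hid
    rw [hqdef]
    linear_combination α^(n+2) * hid
  have hμpow_pos : (0:ℝ) < μ^(n+1) := pow_pos hμ_pos (n+1)
  have hD_lower : ((n:ℝ)+2)*α ≤ D := by
    have h9 : 0 ≤ α^(n+2)*((x-1)^2*q) := mul_nonneg (pow_nonneg hα0'.le _) (mul_nonneg (sq_nonneg _) hq0)
    have : ((n:ℝ)+2)*α*μ^(n+1) ≤ D*μ^(n+1) := by linarith [hDmul, hfact]
    exact le_of_mul_le_mul_right this hμpow_pos
  have hD_pos : 0 < D := lt_of_lt_of_le (by positivity) hD_lower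
  set C : ℝ := ((n:ℝ)+1)*((n:ℝ)+2)/(2*α) with hCdef
  have hC_pos : 0 < C := div_pos (by positivity) (by linarith)
  have hD_upper : D - ((n:ℝ)+2)*α ≤ C*(μ-α)^2 := by
    have hub2 : α^(n+2)*((x-1)^2*q) ≤ α^(n+2)*((x-1)^2*(((n:ℝ)+1)*((n:ℝ)+2)/2*x^(n+1))) := by
      gcongr
    have hxx : α^(n+2)*((x-1)^2*(((n:ℝ)+1)*((n:ℝ)+2)/2*x^(n+1))) = (C*(μ-α)^2)*μ^(n+1) := by
      rw [hμx, hCdef]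
      field_simp
      ring
    have hmain : (D - ((n:ℝ)+2)*α)*μ^(n+1) ≤ (C*(μ-α)^2)*μ^(n+1) := by
      linarith [hDmul, hfact, hub2, hxx]
    exact le_of_mul_le_mul_right hmain hμpow_pos
  -- final numeric bound
  have hpow2 : (1:ℝ)/2 ≤ α^(2*n+2) := by
    have hb := bern (-(1/(4*((n:ℝ)+2)))) (by linarith) (2*n+2)
    have hmono : (1 - 1/(4*((n:ℝ)+2)))^(2*n+2) ≤ α^(2*n+2) :=
      pow_le_pow_left₀ (by linarith) hαl _
    have hfrac : (2*(n:ℝ)+2)*(1/(4*((n:ℝ)+2))) ≤ 1/2 := by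
      rw [mul_one_div, div_le_div_iff₀ hc4 (by norm_num)]
      linarith
    have h1 : (1:ℝ) + (-(1/(4*((n:ℝ)+2)))) = 1 - 1/(4*((n:ℝ)+2)) := by ring
    rw [h1] at hb
    push_cast at hb
    linarith [hb, hmono, hfrac]
  -- sq bound
  have hsq : (μ-α)^2 ≤ ((1-α)/(2*α^n))^2 :=
    pow_le_pow_left₀ (by linarith) h6 2
  -- assemble
  have hcα : (0:ℝ) < ((n:ℝ)+2)*α := by positivity
  have hHeq : (1 - Hfun (n+2) α)/(1 + Hfun (n+2) α) = (D - ((n:ℝ)+2)*α)/(D + ((n:ℝ)+2)*α) := by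
    rw [hHval]
    have hDne : D ≠ 0 := hD_pos.ne'
    have hsum_pos : (0:ℝ) < D + ((n:ℝ)+2)*α := by linarith
    field_simp
  have hfin : (C*((1-α)/(2*α^n))^2)/(2*(((n:ℝ)+2)*α)) ≤ (((n:ℝ)+2)/2)*((1-α)/(1+α))^2 := by
    have hA : (0:ℝ) < α^n := pow_pos hα0' n
    have h1a : (0:ℝ) < 1+α := by linarith
    have lhs_eq : (C*((1-α)/(2*α^n))^2)/(2*(((n:ℝ)+2)*α))
        = ((n:ℝ)+1)*(1-α)^2 / (16*α^(2*n+2)) := by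
      rw [hCdef]
      field_simp
      ring
    have rhs_eq : (((n:ℝ)+2)/2)*((1-α)/(1+α))^2 = ((n:ℝ)+2)*(1-α)^2/(2*(1+α)^2) := by
      field_simp
    rw [lhs_eq, rhs_eq, div_le_div_iff₀ (by positivity) (by positivity)]
    have h4 : (1+α)^2 ≤ 4 := by
      have h24 : (1+α)^2 ≤ 2^2 := pow_le_pow_left₀ (by linarith) (by linarith) 2
      linarith [h24]
    have hh1 := mul_le_mul_of_nonneg_left h4 (show (0:ℝ) ≤ 2*((n:ℝ)+1)*(1-α)^2 by positivity)
    have hh2 := mul_le_mul_of_nonneg_left hpow2 (show (0:ℝ) ≤ 16*((n:ℝ)+2)*(1-α)^2 by positivity)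
    have hh3 := sq_nonneg (1-α)
    linarith [hh1, hh2, hh3]
  have hgoal : (D - ((n:ℝ)+2)*α)/(D + ((n:ℝ)+2)*α) ≤ (((n:ℝ)+2)/2)*((1-α)/(1+α))^2 := by
    have hstep : (D - ((n:ℝ)+2)*α)/(D + ((n:ℝ)+2)*α)
        ≤ (C*((1-α)/(2*α^n))^2)/(2*(((n:ℝ)+2)*α)) := by
      apply div_le_div₀ (by positivity) ?_ (by positivity) (by linarith)
      calc D - ((n:ℝ)+2)*α ≤ C*(μ-α)^2 := hD_upper
        _ ≤ C*((1-α)/(2*α^n))^2 := mul_le_mul_of_nonneg_left hsq hC_pos.le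
    exact hstep.trans hfin
  rw [hHeq]
  push_cast
  exact hgoal
end

section
/- Let p ≥ 2 be an integer. For every α ∈ (0,1), one has H(α) > α^(1 − 1/p). -/
/-- **Lemma 6.** For every `α ∈ (0,1)`, `H(α) > α^(1 - 1/p)`. -/
theorem Hfun_gt_rpow (p : ℕ) (hp : 2 ≤ p) (α : ℝ) (hα : α ∈ Set.Ioo (0 : ℝ) 1) :
    Hfun p α > α ^ ((1 : ℝ) - 1 / p) := by
  obtain ⟨hα0, hα1⟩ := hα
  set q : ℝ := (p : ℝ) with hq
  have hq2 : (2 : ℝ) ≤ q := by rw [hq]; exact_mod_cast hp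
  have hq1 : (1 : ℝ) ≤ q - 1 := by linarith
  have h1α : (0 : ℝ) < 1 - α := by linarith
  -- α^p < α
  have hαp_lt : α ^ p < α := by
    calc α ^ p < α ^ 1 := pow_lt_pow_right_of_lt_one₀ hα0 hα1 (by omega)
    _ = α := pow_one α
  set X : ℝ := (α - α ^ p) / ((q - 1) * (1 - α)) with hX
  have hden : (0 : ℝ) < (q - 1) * (1 - α) := by nlinarith
  have hXpos : 0 < X := div_pos (by linarith) hden
  set m : ℝ := mu p α with hm
  have hm_def : m = X ^ ((1 : ℝ) / q) := by rw [hm, mu, hX, hq]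
  have hmpos : 0 < m := by rw [hm_def]; exact Real.rpow_pos_of_pos hXpos _
  have hq0 : q ≠ 0 := by linarith
  -- m ^ p = X
  have hmp : m ^ p = X := by
    rw [hm_def, ← Real.rpow_natCast (X ^ ((1 : ℝ) / q)) p, ← Real.rpow_mul hXpos.le]
    rw [one_div_mul_cancel] <;> simp [hq0]
  -- Bernoulli: X ≤ α
  have hbern : 1 + ((p - 1 : ℕ) : ℝ) * (α - 1) ≤ (1 + (α - 1)) ^ (p - 1) :=
    one_add_mul_le_pow (by linarith) (p - 1)
  have hcast : ((p - 1 : ℕ) : ℝ) = q - 1 := by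
    rw [hq]; push_cast [Nat.cast_sub (by omega : 1 ≤ p)]; ring
  have hpow_split : α * α ^ (p - 1) = α ^ p := by
    rw [← pow_succ']; congr 1; omega
  have hXle : X ≤ α := by
    rw [hX, div_le_iff₀ hden]
    have : 1 + (q - 1) * (α - 1) ≤ α ^ (p - 1) := by
      rw [← hcast]; simpa using hbern
    nlinarith
  -- m ≤ α^(1/q)
  have hmle : m ≤ α ^ ((1 : ℝ) / q) := by
    rw [hm_def]
    exact Real.rpow_le_rpow hXpos.le hXle (by positivity)
  -- h1 : α^(1-1/q) * m ≤ α
  have h1 : α ^ ((1 : ℝ) - 1 / q) * m ≤ α := by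
    calc α ^ ((1 : ℝ) - 1 / q) * m ≤ α ^ ((1 : ℝ) - 1 / q) * α ^ ((1 : ℝ) / q) :=
          mul_le_mul_of_nonneg_left hmle (by positivity)
      _ = α ^ ((1 : ℝ) - 1 / q + 1 / q) := (Real.rpow_add hα0 _ _).symm
      _ = α := by norm_num
  -- strict geometric sum bound : (q-1) * α^(p-1) < ∑_{k<p-1} α^k
  have hsum : (q - 1) * α ^ (p - 1) < ∑ k ∈ Finset.range (p - 1), α ^ k := by
    have hne : (Finset.range (p - 1)).Nonempty := by
      rw [Finset.nonempty_range_iff]; omega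
    have : ∑ k ∈ Finset.range (p - 1), α ^ (p - 1) < ∑ k ∈ Finset.range (p - 1), α ^ k := by
      apply Finset.sum_lt_sum_of_nonempty hne
      intro k hk
      exact pow_lt_pow_right_of_lt_one₀ hα0 hα1 (Finset.mem_range.mp hk)
    calc (q - 1) * α ^ (p - 1) = ∑ k ∈ Finset.range (p - 1), α ^ (p - 1) := by
          rw [Finset.sum_const, Finset.card_range, nsmul_eq_mul, hcast]
      _ < _ := this
  -- geometric sum identity
  have hgs : (1 - α) * (∑ k ∈ Finset.range (p - 1), α ^ k) = 1 - α ^ (p - 1) := by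
    have := geom_sum_mul α (p - 1)
    nlinarith [this]
  -- h2 : α^p < X
  have h2 : α ^ p < X := by
    rw [hX, lt_div_iff₀ hden]
    nlinarith [mul_lt_mul_of_pos_left hsum (mul_pos hα0 h1α)]
  -- denominator positive
  have hmp1_pos : 0 < m ^ (p - 1) := pow_pos hmpos _
  set D : ℝ := (q - 1) * m + α ^ p / m ^ (p - 1) with hD
  have hDpos : 0 < D := by
    apply add_pos
    · exact mul_pos (by linarith) hmpos
    · exact div_pos (pow_pos hα0 p) hmp1_pos
  have hmm : m ^ (p - 1) * m = m ^ p := by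
    rw [← pow_succ]; congr 1; omega
  have hDm : D * m ^ (p - 1) = (q - 1) * X + α ^ p := by
    rw [hD, add_mul, div_mul_cancel₀ _ hmp1_pos.ne', mul_assoc, mul_comm m, hmm, hmp]
  rw [Hfun, gt_iff_lt, lt_div_iff₀ hDpos]
  show α ^ ((1 : ℝ) - 1 / q) * D < q * α
  have key : α ^ ((1 : ℝ) - 1 / q) * D * (m ^ (p - 1) * m) < q * α * (m ^ (p - 1) * m) := by
    have e1 : α ^ ((1 : ℝ) - 1 / q) * D * (m ^ (p - 1) * m)
        = (α ^ ((1 : ℝ) - 1 / q) * m) * (D * m ^ (p - 1)) := by ring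
    rw [e1, hDm]
    have hnn : (0 : ℝ) ≤ (q - 1) * X + α ^ p := by positivity
    calc (α ^ ((1 : ℝ) - 1 / q) * m) * ((q - 1) * X + α ^ p)
        ≤ α * ((q - 1) * X + α ^ p) := mul_le_mul_of_nonneg_right h1 hnn
      _ < α * ((q - 1) * X + X) := by
          apply mul_lt_mul_of_pos_left _ hα0; linarith
      _ = q * α * (m ^ (p - 1) * m) := by rw [hmm, hmp]; ring
  exact lt_of_mul_lt_mul_right key (by positivity)
end

section
/- Let p ≥ 2 be an integer and suppose α* ∈ (0,1) satisfies (p/2)·((1−α*)/(1+α*)) < 1 and (1 − H(t))/(1 + H(t)) ≤ (p/2)·((1−t)/(1+t))^2 for all t ∈ [α*, 1). Let α ∈ (0,1) and suppose α_K ≥ α* for some integer K ≥ 0. Then for every integer j ≥ 0, (p/2)·(1 − α_{K+j})/(1 + α_{K+j}) ≤ ((p/2)·(1 − α_K)/(1 + α_K))^(2^j). -/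
/-- The sequence `α_0 = α`, `α_{k+1} = p α_k / ((p-1) μ(α_k) + μ(α_k)^(1-p) α_k^p)`. -/
noncomputable def alphaSeq (p : ℕ) (α : ℝ) : ℕ → ℝ
  | 0 => α
  | k + 1 =>
      (p : ℝ) * alphaSeq p α k /
        (((p : ℝ) - 1) * mu p (alphaSeq p α k) +
          alphaSeq p α k ^ p / mu p (alphaSeq p α k) ^ (p - 1))

-- strict Bernoulli for nat exponent
lemma bern_strict (p : ℕ) (hp : 2 ≤ p) {x : ℝ} (hx : 0 ≤ x) (hx1 : x ≠ 1) :
    1 + (p : ℝ) * (x - 1) < x ^ p := by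
  have h := one_add_mul_self_lt_rpow_one_add (s := x - 1) (by linarith) (by
    intro h; apply hx1; linarith) (p := (p : ℝ)) (by exact_mod_cast hp.trans_lt' one_lt_two)
  rw [show (1 : ℝ) + (x - 1) = x by ring, Real.rpow_natCast] at h
  exact h

lemma mu_pos (p : ℕ) (hp : 2 ≤ p) {t : ℝ} (ht : t ∈ Set.Ioo (0:ℝ) 1) : 0 < mu p t := by
  obtain ⟨h0, h1⟩ := ht
  have htp : t ^ p < t := by
    calc t ^ p < t ^ 1 := pow_lt_pow_right_of_lt_one₀ h0 h1 (by omega)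
    _ = t := pow_one t
  have : 0 < (t - t ^ p) / (((p : ℝ) - 1) * (1 - t)) := by
    apply div_pos (by linarith)
    have : (1:ℝ) < (p:ℝ) := by exact_mod_cast hp.trans_lt' one_lt_two
    nlinarith
  exact Real.rpow_pos_of_pos this _

lemma mu_pow (p : ℕ) (hp : 2 ≤ p) {t : ℝ} (ht : t ∈ Set.Ioo (0:ℝ) 1) :
    (mu p t) ^ p = (t - t ^ p) / (((p : ℝ) - 1) * (1 - t)) := by
  obtain ⟨h0, h1⟩ := ht
  have htp : t ^ p < t := by
    calc t ^ p < t ^ 1 := pow_lt_pow_right_of_lt_one₀ h0 h1 (by omega)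
    _ = t := pow_one t
  have hX : 0 < (t - t ^ p) / (((p : ℝ) - 1) * (1 - t)) := by
    apply div_pos (by linarith)
    have : (1:ℝ) < (p:ℝ) := by exact_mod_cast hp.trans_lt' one_lt_two
    nlinarith
  rw [mu, one_div, Real.rpow_inv_natCast_pow hX.le (by omega)]

-- key: denominator strictly exceeds p t
lemma denom_gt (p : ℕ) (hp : 2 ≤ p) {t : ℝ} (ht : t ∈ Set.Ioo (0:ℝ) 1) :
    (p : ℝ) * t < ((p : ℝ) - 1) * mu p t + t ^ p / mu p t ^ (p - 1) := by
  obtain ⟨h0, h1⟩ := ht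
  set m := mu p t with hm
  have hmpos : 0 < m := mu_pos p hp ⟨h0, h1⟩
  have hmp : m ^ p = (t - t ^ p) / (((p : ℝ) - 1) * (1 - t)) := mu_pow p hp ⟨h0, h1⟩
  have hp1 : (1:ℝ) < (p:ℝ) := by exact_mod_cast hp.trans_lt' one_lt_two
  -- m ≠ t : else t^p = m^p gives contradiction via bernoulli at 1/t
  have hmt : m ≠ t := by
    intro h
    have hden : ((p:ℝ) - 1) * (1 - t) ≠ 0 := by
      have : (1:ℝ) < (p:ℝ) := hp1
      intro hh; rcases mul_eq_zero.mp hh with h' | h' <;> nlinarith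
    have h2 : t ^ p * (((p:ℝ) - 1) * (1 - t)) = t - t ^ p := by
      have h3 := hmp; rw [h, eq_div_iff hden] at h3; exact h3
    -- bernoulli at x = 1/t : 1 + p*(1/t - 1) < (1/t)^p
    have hb := bern_strict p hp (x := 1/t) (by positivity) (by
      intro hh; rw [div_eq_one_iff_eq (by linarith)] at hh; exact (by linarith : t ≠ 1) hh.symm)
    have htp : (0:ℝ) < t ^ p := by positivity
    rw [div_pow, one_pow] at hb
    have hb' : t ^ p * (1 + (p:ℝ) * (1/t - 1)) < 1 := by
      have := (mul_lt_mul_iff_right₀ htp).mpr hb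
      rwa [mul_div_cancel₀ 1 (ne_of_gt htp)] at this
    have hti : t * (1/t) = 1 := by field_simp
    nlinarith [mul_lt_mul_of_pos_right hb' h0, hti, h2, pow_pos h0 p,
      mul_pos (pow_pos h0 p) h0]
  -- bernoulli at s = t/m
  have hs : (0:ℝ) ≤ t/m := by positivity
  have hs1 : t/m ≠ 1 := by
    intro h; rw [div_eq_one_iff_eq (ne_of_gt hmpos)] at h; exact hmt h.symm
  have hb := bern_strict p hp hs hs1
  rw [div_pow] at hb
  have hmpp : (0:ℝ) < m ^ p := by positivity
  have key : m ^ p * (1 + (p:ℝ) * (t/m - 1)) < t ^ p := by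
    have := (mul_lt_mul_iff_right₀ hmpp).mpr hb
    rwa [mul_div_cancel₀ _ (ne_of_gt hmpp)] at this
  -- expand: m^p + p*t*m^(p-1) - p*m^p < t^p
  have hpow : m ^ p = m ^ (p-1) * m := by
    rw [← pow_succ]; congr 1; omega
  have hmp1 : (0:ℝ) < m ^ (p-1) := by positivity
  have hq : m ^ p * (t/m) = m ^ (p-1) * t := by
    rw [hpow]; field_simp
  rw [← sub_lt_iff_lt_add', lt_div_iff₀ hmp1]
  nlinarith [key, hq, hpow]


lemma Hfun_mem (p : ℕ) (hp : 2 ≤ p) {t : ℝ} (ht : t ∈ Set.Ioo (0:ℝ) 1) :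
    Hfun p t ∈ Set.Ioo (0:ℝ) 1 := by
  obtain ⟨h0, h1⟩ := ht
  have hD := denom_gt p hp ⟨h0, h1⟩
  have hpt : (0:ℝ) < (p:ℝ) * t := by
    have : (0:ℝ) < (p:ℝ) := by positivity
    exact mul_pos this h0
  have hDpos : 0 < ((p : ℝ) - 1) * mu p t + t ^ p / mu p t ^ (p - 1) := hpt.trans hD
  constructor
  · exact div_pos hpt hDpos
  · exact (div_lt_one hDpos).mpr hD

lemma alphaSeq_succ (p : ℕ) (α : ℝ) (k : ℕ) :
    alphaSeq p α (k + 1) = Hfun p (alphaSeq p α k) := rfl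

lemma alphaSeq_mem (p : ℕ) (hp : 2 ≤ p) {α : ℝ} (hα : α ∈ Set.Ioo (0:ℝ) 1) :
    ∀ k, alphaSeq p α k ∈ Set.Ioo (0:ℝ) 1
  | 0 => hα
  | k + 1 => by
    rw [alphaSeq_succ]
    exact Hfun_mem p hp (alphaSeq_mem p hp hα k)

/-- **Stage 3 bound.** Suppose `α* ∈ (0,1)` satisfies `(p/2)((1-α*)/(1+α*)) < 1` and
`(1-H(t))/(1+H(t)) ≤ (p/2)((1-t)/(1+t))^2` for all `t ∈ [α*,1)`.  If `α_K ≥ α*` for some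
`K ≥ 0`, then for every `j ≥ 0`,
`(p/2)(1-α_{K+j})/(1+α_{K+j}) ≤ ((p/2)(1-α_K)/(1+α_K))^(2^j)`. -/
theorem alphaSeq_quadratic_convergence (p : ℕ) (hp : 2 ≤ p)
    (αstar : ℝ) (hαstar : αstar ∈ Set.Ioo (0 : ℝ) 1)
    (h1 : ((p : ℝ) / 2) * ((1 - αstar) / (1 + αstar)) < 1)
    (h2 : ∀ t ∈ Set.Ico αstar (1 : ℝ),
      (1 - Hfun p t) / (1 + Hfun p t) ≤ ((p : ℝ) / 2) * ((1 - t) / (1 + t)) ^ 2)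
    (α : ℝ) (hα : α ∈ Set.Ioo (0 : ℝ) 1)
    (K : ℕ) (hK : alphaSeq p α K ≥ αstar) :
    ∀ j : ℕ,
      ((p : ℝ) / 2) * ((1 - alphaSeq p α (K + j)) / (1 + alphaSeq p α (K + j))) ≤
        (((p : ℝ) / 2) * ((1 - alphaSeq p α K) / (1 + alphaSeq p α K))) ^ (2 ^ j) := by
  obtain ⟨hs0, hs1⟩ := hαstar
  have hmem := alphaSeq_mem p hp hα
  have hpnn : (0:ℝ) ≤ (p:ℝ)/2 := by positivity
  -- step: if αstar ≤ a, a ∈ (0,1), then αstar ≤ H(a)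
  have hstep : ∀ a : ℝ, a ∈ Set.Ioo (0:ℝ) 1 → αstar ≤ a → αstar ≤ Hfun p a := by
    intro a ⟨ha0, ha1⟩ haS
    have hkey := h2 a ⟨haS, ha1⟩
    have hx0 : (0:ℝ) ≤ (1 - a)/(1 + a) := by
      apply div_nonneg <;> linarith
    have hxle : (1 - a)/(1 + a) ≤ (1 - αstar)/(1 + αstar) := by
      rw [div_le_div_iff₀ (by linarith) (by linarith)]; nlinarith
    have hc : ((p:ℝ)/2) * ((1 - a)/(1 + a)) < 1 :=
      lt_of_le_of_lt (mul_le_mul_of_nonneg_left hxle hpnn) h1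
    have hrhs : ((p:ℝ)/2) * ((1 - a)/(1 + a)) ^ 2 ≤ (1 - αstar)/(1 + αstar) := by
      calc ((p:ℝ)/2) * ((1 - a)/(1 + a)) ^ 2
          = (((p:ℝ)/2) * ((1 - a)/(1 + a))) * ((1 - a)/(1 + a)) := by ring
        _ ≤ 1 * ((1 - a)/(1 + a)) := mul_le_mul_of_nonneg_right hc.le hx0
        _ = (1 - a)/(1 + a) := one_mul _
        _ ≤ (1 - αstar)/(1 + αstar) := hxle
    have hHmem := Hfun_mem p hp ⟨ha0, ha1⟩
    have hH0 := hHmem.1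
    have hfin : (1 - Hfun p a)/(1 + Hfun p a) ≤ (1 - αstar)/(1 + αstar) :=
      hkey.trans hrhs
    rw [div_le_div_iff₀ (by linarith) (by linarith)] at hfin
    nlinarith
  -- invariant: αstar ≤ α_{K+j}
  have hge : ∀ j, αstar ≤ alphaSeq p α (K + j) := by
    intro j
    induction j with
    | zero => exact hK
    | succ j ih =>
      have : K + (j + 1) = (K + j) + 1 := rfl
      rw [this, alphaSeq_succ]
      exact hstep _ (hmem _) ih
  intro j
  induction j with
  | zero => simp
  | succ j ih =>
    set a := alphaSeq p α (K + j) with ha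
    have ham := hmem (K + j)
    have hkey := h2 a ⟨hge j, ham.2⟩
    have hx0 : (0:ℝ) ≤ (1 - a)/(1 + a) := by
      apply div_nonneg <;> [linarith [ham.2]; linarith [ham.1]]
    have hBnn : (0:ℝ) ≤ ((p:ℝ)/2) * ((1 - a)/(1 + a)) := mul_nonneg hpnn hx0
    have hrw : K + (j + 1) = (K + j) + 1 := rfl
    rw [hrw, alphaSeq_succ, ← ha]
    calc ((p : ℝ)/2) * ((1 - Hfun p a) / (1 + Hfun p a))
        ≤ ((p:ℝ)/2) * (((p:ℝ)/2) * ((1 - a)/(1 + a)) ^ 2) :=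
          mul_le_mul_of_nonneg_left hkey hpnn
      _ = (((p:ℝ)/2) * ((1 - a)/(1 + a))) ^ 2 := by ring
      _ ≤ ((((p : ℝ)/2) * ((1 - alphaSeq p α K)/(1 + alphaSeq p α K))) ^ (2 ^ j)) ^ 2 :=
          pow_le_pow_left₀ hBnn ih 2
      _ = (((p : ℝ)/2) * ((1 - alphaSeq p α K)/(1 + alphaSeq p α K))) ^ (2 ^ (j + 1)) := by
          rw [← pow_mul, pow_succ]
end
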